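/- arXiv:2211.01436 — 2 statements merged into one kernel-verified Lean document; each statement's English description precedes it below -/
import Mathlib

section
/- For every natural number a, the numerical semigroup S(a) satisfies Wilf's conjecture: F(S(a)) + 1 ≤ e(S(a))·n(S(a)), where F(S(a)) is the Frobenius number of S(a), e(S(a)) is the cardinality of the minimal system of generators of S(a), and n(S(a)) is the number of elements of S(a) that are smaller than F(S(a)). -/
/-- The Lucas sequence: l 0 = 2, l 1 = 1, l (n+2) = l (n+1) + l n. -/
def lucas : ℕ → ℕ
  | 0 => 2
  | 1 => 1
  | n + 2 => lucas (n + 1) + lucas n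

/-- The modified (monotone) Lucas sequence: l̃ 0 = 1, l̃ 1 = 2, l̃ n = l n for n ≥ 2. -/
def ltil : ℕ → ℕ
  | 0 => 1
  | 1 => 2
  | n + 2 => lucas (n + 2)

/-- β x : minimal number of summands in a representation of x as a sum of
modified Lucas numbers (with repetitions allowed). -/
noncomputable def beta (x : ℕ) : ℕ :=
  sInf {s : ℕ | ∃ k : ℕ, ∃ b : ℕ → ℕ,
    x = ∑ i ∈ Finset.range (k + 1), b i * ltil i ∧ s = ∑ i ∈ Finset.range (k + 1), b i}

/-- γ x : the greatest k with l̃ k ≤ x (for x ≥ 1). -/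
noncomputable def gamma (x : ℕ) : ℕ := sSup {k : ℕ | ltil k ≤ x}

/-- S a : the additive submonoid of ℕ generated by {l_a} ∪ {l_a + l_n : n ∈ ℕ}. -/
def Sset (a : ℕ) : AddSubmonoid ℕ :=
  AddSubmonoid.closure ({lucas a} ∪ {x : ℕ | ∃ n : ℕ, x = lucas a + lucas n})

/-- T a : the additive submonoid of ℕ generated by {l_a + l_n : n ∈ ℕ}. -/
def Tset (a : ℕ) : AddSubmonoid ℕ :=
  AddSubmonoid.closure {x : ℕ | ∃ n : ℕ, x = lucas a + lucas n}

/-- The Frobenius number of S a, as an integer (−1 when S a = ℕ). -/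
noncomputable def frobZ (a : ℕ) : ℤ :=
  sSup (insert (-1 : ℤ) ((fun n : ℕ => (n : ℤ)) '' {x : ℕ | x ∉ Sset a}))

/-!
For `a ≥ 2` everything is explicit. An element of `S(a)` is `c * l_a` plus at most `c` Lucas
numbers, and at most `c` Lucas numbers add up to every integer below `l̃(2c+2) - 2` (greedily,
two indices per summand). Hence every `x ≥ ⌊a/2⌋ * l_a` lies in `S(a)`, and so do the
`l̃(2⌊a/2⌋) - 2` numbers `(⌊a/2⌋ - 1) * l_a + t` just below it. Conversely, writing `j * l_a - 1`
as a sum of Lucas numbers takes more than `⌊a/2⌋ - j` of them, so `F(S(a)) = ⌊a/2⌋ * l_a - 1`.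
The `a + 1` elements `l_a` and `l_a + l_n` (`n < a`) are below `2 * l_a`, hence irreducible and in
every generating set, and Wilf's inequality reduces to
`⌊a/2⌋ * l_a ≤ (a + 1) * (l̃(2⌊a/2⌋) - 2)`. Finally `S(0) = ⟨2, 3⟩` and `S(1) = ℕ`.
-/

lemma lucas_add_two (n : ℕ) : lucas (n + 2) = lucas (n + 1) + lucas n := rfl

lemma lucas_pos : ∀ n, 0 < lucas n
  | 0 => by decide
  | 1 => by decide
  | n + 2 => by have := lucas_pos n; rw [lucas_add_two]; omega

lemma ltil_eq_lucas_swap : ∀ n, ltil n = lucas (Equiv.swap 0 1 n)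
  | 0 => rfl
  | 1 => rfl
  | n + 2 => by rw [Equiv.swap_apply_of_ne_of_ne (by omega) (by omega)]; rfl

lemma lucas_eq_ltil_swap (n : ℕ) : lucas n = ltil (Equiv.swap 0 1 n) := by
  rw [ltil_eq_lucas_swap, Equiv.swap_apply_self]

lemma ltil_eq_lucas {n : ℕ} (hn : 2 ≤ n) : ltil n = lucas n := by
  rw [ltil_eq_lucas_swap, Equiv.swap_apply_of_ne_of_ne (by omega) (by omega)]

lemma ltil_add_two {n : ℕ} (hn : 2 ≤ n) : ltil (n + 2) = ltil (n + 1) + ltil n := by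
  rw [ltil_eq_lucas hn, ltil_eq_lucas (by omega), ltil_eq_lucas (by omega), lucas_add_two]

lemma ltil_strictMono : StrictMono ltil := by
  refine strictMono_nat_of_lt_succ fun n => ?_
  match n with
  | 0 | 1 => decide
  | n + 2 =>
    have := lucas_pos (n + 1)
    rw [ltil_eq_lucas (by omega), ltil_eq_lucas (by omega)]
    exact Nat.lt_add_of_pos_right this

lemma add_three_le_ltil {n : ℕ} (hn : 4 ≤ n) : n + 3 ≤ ltil n := by
  induction n, hn using Nat.le_induction with
  | base => decide
  | succ n _ ih => have := ltil_strictMono (Nat.lt_add_one n); omega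

lemma lucas_injective : Function.Injective lucas := fun m n h => by
  rw [lucas_eq_ltil_swap, lucas_eq_ltil_swap] at h
  exact (Equiv.swap 0 1).injective (ltil_strictMono.injective h)

lemma lucas_lt_lucas {m n : ℕ} (hn : 2 ≤ n) (hmn : m < n) : lucas m < lucas n := by
  rw [lucas_eq_ltil_swap, ← ltil_eq_lucas hn]
  refine ltil_strictMono ?_
  rw [Equiv.swap_apply_def]
  split_ifs <;> omega

lemma three_le_lucas {n : ℕ} (hn : 2 ≤ n) : 3 ≤ lucas n :=
  lucas_lt_lucas hn (by omega : 0 < n)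

lemma lucas_add_add_one (m : ℕ) : ∀ n,
    lucas (m + n + 1) = Nat.fib n * lucas m + Nat.fib (n + 1) * lucas (m + 1)
  | 0 => by simp
  | 1 => by simp [show m + 1 + 1 = m + 2 from rfl, lucas_add_two, add_comm]
  | n + 2 => by
    rw [show m + (n + 2) + 1 = m + n + 1 + 2 by omega, lucas_add_two,
      show m + n + 1 + 1 = m + (n + 1) + 1 by omega, lucas_add_add_one m n,
      lucas_add_add_one m (n + 1)]
    simp only [Nat.fib_add_two]
    ring

lemma exists_ltil_le_sub_add_three_le {c t : ℕ} (hlo : ltil (2 * c + 2) < t + 3)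
    (hhi : t + 3 ≤ ltil (2 * c + 4)) : ∃ i, ltil i ≤ t ∧ t - ltil i + 3 ≤ ltil (2 * c + 2) := by
  rcases Nat.eq_zero_or_pos c with rfl | hc
  · have ht : 1 ≤ t ∧ t ≤ 4 := by
      rw [show ltil (2 * 0 + 2) = 3 from rfl] at hlo
      rw [show ltil (2 * 0 + 4) = 7 from rfl] at hhi
      omega
    obtain ⟨ht1, ht4⟩ := ht
    refine ⟨t - 1, ?_⟩
    interval_cases t <;> decide
  · have r4 : ltil (2 * c + 4) = ltil (2 * c + 3) + ltil (2 * c + 2) := ltil_add_two (by omega)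
    have r3 : ltil (2 * c + 3) = ltil (2 * c + 2) + ltil (2 * c + 1) := ltil_add_two (by omega)
    have r2 : ltil (2 * c + 2) = ltil (2 * c + 1) + ltil (2 * c) := ltil_add_two (by omega)
    have h3 : ltil 2 ≤ ltil (2 * c) := ltil_strictMono.monotone (by omega)
    rw [show ltil 2 = 3 from rfl] at h3
    have h1 : ltil (2 * c) < ltil (2 * c + 1) := ltil_strictMono (by omega)
    by_cases hge3 : ltil (2 * c + 3) ≤ t
    · exact ⟨2 * c + 3, hge3, by omega⟩
    by_cases hge2 : ltil (2 * c + 2) ≤ t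
    · exact ⟨2 * c + 2, hge2, by omega⟩
    · exact ⟨2 * c + 1, by omega, by omega⟩

lemma exists_card_le_sum_map_ltil_eq : ∀ (c t : ℕ), t + 3 ≤ ltil (2 * c + 2) →
    ∃ N : Multiset ℕ, N.card ≤ c ∧ (N.map ltil).sum = t
  | 0, t, ht => ⟨0, le_rfl, by rw [show ltil (2 * 0 + 2) = 3 from rfl] at ht; simp; omega⟩
  | c + 1, t, ht => by
    by_cases hlo : t + 3 ≤ ltil (2 * c + 2)
    · obtain ⟨N, hN, hsum⟩ := exists_card_le_sum_map_ltil_eq c t hlo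
      exact ⟨N, by omega, hsum⟩
    · obtain ⟨i, hi, hrem⟩ := exists_ltil_le_sub_add_three_le (c := c) (by omega) ht
      obtain ⟨N, hN, hsum⟩ := exists_card_le_sum_map_ltil_eq c (t - ltil i) hrem
      exact ⟨i ::ₘ N, by simpa, by simp [hsum]; omega⟩

/-- The invariant of the induction bounding the number of summands from below: the bound
`⌊(n+1)/2⌋ + D - E - 1` survives removing a summand `l̃ n` or `l̃ (n-1)`, and lowering `n` by two
when neither occurs. -/
def ManyParts (n : ℕ) (N : Multiset ℕ) : Prop :=
  ∀ D E : ℤ, 1 ≤ D → ((N.map ltil).sum : ℤ) = D * ltil (n + 1) - E * ltil n - 1 →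
    (((n + 1) / 2 : ℕ) : ℤ) + D - E - 1 ≤ N.card

lemma manyParts_of_lt_four {n : ℕ} {N : Multiset ℕ} (hn : n < 4) (hN : ∀ i ∈ N, i ≤ n) :
    ManyParts n N := by
  intro D E hD hsum
  have hle : (N.map ltil).sum ≤ N.card * ltil n := by
    simpa using Multiset.sum_le_card_nsmul (N.map ltil) (ltil n)
      (by simpa using fun i hi => ltil_strictMono.monotone (hN i hi))
  have hle' : ((N.map ltil).sum : ℤ) ≤ N.card * ltil n := by exact_mod_cast hle
  interval_cases n <;> norm_num [ltil, lucas] at hsum hle' ⊢ <;> omega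

lemma ManyParts.cons_self {n : ℕ} {N : Multiset ℕ} (h : ManyParts n N) :
    ManyParts n (n ::ₘ N) := by
  intro D E hD hsum
  simp only [Multiset.map_cons, Multiset.sum_cons, Nat.cast_add] at hsum
  have := h D (E + 1) hD (by linarith)
  simp only [Multiset.card_cons, Nat.cast_succ]
  linarith

lemma ManyParts.cons {m : ℕ} {N : Multiset ℕ} (hm : 2 ≤ m) (h : ManyParts (m + 1) N)
    (h' : ManyParts m N) : ManyParts (m + 1) (m ::ₘ N) := by
  intro D E hD hsum
  have hrec : (ltil (m + 1 + 1) : ℤ) = ltil (m + 1) + ltil m := by exact_mod_cast ltil_add_two hm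
  simp only [Multiset.map_cons, Multiset.sum_cons, Nat.cast_add] at hsum
  simp only [Multiset.card_cons, Nat.cast_succ]
  rcases hD.lt_or_eq with hD | rfl
  · have := h (D - 1) (E - 1) (by omega) (by linarith)
    linarith
  · have hE : E ≤ 0 := by
      by_contra! hE
      have h0 : (0 : ℤ) ≤ (N.map ltil).sum := by positivity
      have hl : (0 : ℤ) ≤ (E - 1) * ltil (m + 1) := mul_nonneg (by omega) (by positivity)
      linarith
    have := h' (1 - E) 0 (by omega) (by linarith)
    have hdiv : (m + 1 + 1) / 2 ≤ (m + 1) / 2 + 1 := by omega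
    have hdiv' : (((m + 1 + 1) / 2 : ℕ) : ℤ) ≤ ((m + 1) / 2 : ℕ) + 1 := by exact_mod_cast hdiv
    linarith

lemma ManyParts.of_sub_two {m : ℕ} {N : Multiset ℕ} (hm : 2 ≤ m) (h : ManyParts m N) :
    ManyParts (m + 2) N := by
  intro D E hD hsum
  have h3 : (ltil (m + 2 + 1) : ℤ) = ltil (m + 2) + ltil (m + 1) := by
    exact_mod_cast ltil_add_two (n := m + 1) (by omega)
  have h2 : (ltil (m + 2) : ℤ) = ltil (m + 1) + ltil m := by exact_mod_cast ltil_add_two hm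
  have hD' : 1 ≤ 2 * D - E := by
    by_contra! hE
    have h0 : (0 : ℤ) ≤ (N.map ltil).sum := by positivity
    have hl : (0 : ℤ) ≤ (E - 2 * D) * ltil (m + 2) := mul_nonneg (by omega) (by positivity)
    have hl' : (0 : ℤ) ≤ D * ltil m := by positivity
    have key : ((N.map ltil).sum : ℤ) = -(D * ltil m) - (E - 2 * D) * ltil (m + 2) - 1 := by
      rw [hsum]; linear_combination D * h3 - D * h2
    linarith
  have := h (2 * D - E) (E - D) hD' (by rw [hsum]; linear_combination D * h3 + (D - E) * h2)
  have hdiv : (m + 2 + 1) / 2 = (m + 1) / 2 + 1 := by omega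
  rw [hdiv, Nat.cast_add, Nat.cast_one]
  linarith

lemma manyParts_of_forall_le {n : ℕ} {N : Multiset ℕ} (hN : ∀ i ∈ N, i ≤ n) : ManyParts n N := by
  obtain hn | ⟨m, rfl, hm⟩ : n < 4 ∨ ∃ m, n = m + 2 ∧ 2 ≤ m :=
    (lt_or_ge n 4).imp_right fun hn => ⟨n - 2, by omega, by omega⟩
  · exact manyParts_of_lt_four hn hN
  by_cases htop : m + 2 ∈ N
  · obtain ⟨N, rfl⟩ := Multiset.exists_cons_of_mem htop
    exact (manyParts_of_forall_le fun i hi => hN i (Multiset.mem_cons_of_mem hi)).cons_self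
  have hN' : ∀ i ∈ N, i ≤ m + 1 := fun i hi => by
    have := hN i hi; have : i ≠ m + 2 := fun h => htop (h ▸ hi); omega
  by_cases hsub : m + 1 ∈ N
  · obtain ⟨N, rfl⟩ := Multiset.exists_cons_of_mem hsub
    have hle : ∀ i ∈ N, i ≤ m + 1 := fun i hi => hN' i (Multiset.mem_cons_of_mem hi)
    exact ManyParts.cons (by omega) (manyParts_of_forall_le fun i hi => (hle i hi).trans (by omega))
      (manyParts_of_forall_le hle)
  · refine ManyParts.of_sub_two hm (manyParts_of_forall_le fun i hi => ?_)
    have := hN' i hi; have : i ≠ m + 1 := fun h => hsub (h ▸ hi); omega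
termination_by N.card + n
decreasing_by all_goals subst_vars; (try simp only [Multiset.card_cons]); omega

lemma mem_Sset_iff {a x : ℕ} :
    x ∈ Sset a ↔ ∃ (c : ℕ) (N : Multiset ℕ), N.card ≤ c ∧ x = c * lucas a + (N.map lucas).sum := by
  constructor
  · intro hx
    induction hx using AddSubmonoid.closure_induction with
    | mem x hx =>
      rcases hx with rfl | ⟨n, rfl⟩
      · exact ⟨1, 0, by simp, by simp⟩
      · exact ⟨1, {n}, by simp, by simp⟩
    | zero => exact ⟨0, 0, le_rfl, by simp⟩
    | add x y _ _ hx hy =>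
      obtain ⟨c, N, hN, rfl⟩ := hx
      obtain ⟨d, M, hM, rfl⟩ := hy
      exact ⟨c + d, N + M, by simp; omega, by simp; ring⟩
  · rintro ⟨c, N, hN, rfl⟩
    induction N using Multiset.induction_on generalizing c with
    | empty => simpa using (Sset a).nsmul_mem (AddSubmonoid.subset_closure (Or.inl rfl)) c
    | cons n N ih =>
      obtain ⟨c, rfl⟩ : ∃ d, c = d + 1 := ⟨c - 1, by simp at hN; omega⟩
      have hgen : lucas a + lucas n ∈ Sset a := AddSubmonoid.subset_closure (Or.inr ⟨n, rfl⟩)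
      convert (Sset a).add_mem hgen (ih c (by simpa using hN)) using 1
      simp only [Multiset.map_cons, Multiset.sum_cons]
      ring

lemma lucas_le_of_mem_Sset {a x : ℕ} (hx : x ∈ Sset a) (hx0 : x ≠ 0) : lucas a ≤ x := by
  obtain ⟨_ | c, N, hN, rfl⟩ := mem_Sset_iff.mp hx
  · simp_all
  · exact le_add_right (Nat.le_mul_of_pos_left _ c.succ_pos)

lemma mul_lucas_add_mem_Sset {a c t : ℕ} (ht : t + 3 ≤ ltil (2 * c + 2)) :
    c * lucas a + t ∈ Sset a := by
  obtain ⟨N, hN, rfl⟩ := exists_card_le_sum_map_ltil_eq c t ht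
  refine mem_Sset_iff.mpr ⟨c, N.map (Equiv.swap 0 1), by simpa using hN, ?_⟩
  simp [Multiset.map_map, ltil_eq_lucas_swap]

lemma mem_Sset_of_mul_lucas_le {a k x : ℕ} (hk : lucas a + 2 ≤ ltil (2 * k + 2))
    (hx : k * lucas a ≤ x) : x ∈ Sset a := by
  have hpos := lucas_pos a
  have hq : k ≤ x / lucas a := (Nat.le_div_iff_mul_le hpos).mpr hx
  have hr := Nat.mod_lt x hpos
  have hmono : ltil (2 * k + 2) ≤ ltil (2 * (x / lucas a) + 2) :=
    ltil_strictMono.monotone (by omega)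
  rw [← Nat.div_add_mod' x (lucas a)]
  exact mul_lucas_add_mem_Sset (by omega)

/-- Summands `l_i` with `i ≥ a` are `fib (i-a+1) * l_a + fib (i-a) * l_(a-1)`; the smaller ones are
`l̃`-values of index `< a`, controlled by `ManyParts (a - 1)`. -/
lemma lt_card_add_of_sum_map_lucas_add_one_eq {a j : ℕ} (ha : 3 ≤ a) {N : Multiset ℕ}
    (hN : (N.map lucas).sum + 1 = j * lucas a) : a / 2 < N.card + j := by
  classical
  set big := N.filter (a ≤ ·)
  set small := N.filter (¬ a ≤ ·)
  set A := (big.map fun i => Nat.fib (i - a + 1)).sum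
  set B := (big.map fun i => Nat.fib (i - a)).sum
  have hBA : B ≤ A := Multiset.sum_map_le_sum_map _ _ fun i _ => Nat.fib_mono (by omega)
  have hbig : (big.map lucas).sum = B * lucas (a - 1) + A * lucas a := by
    rw [← Multiset.sum_map_mul_right, ← Multiset.sum_map_mul_right, ← Multiset.sum_map_add]
    refine congrArg _ (Multiset.map_congr rfl fun i hi => ?_)
    have hai := (Multiset.mem_filter.mp hi).2
    have := lucas_add_add_one (a - 1) (i - a)
    rwa [show a - 1 + (i - a) + 1 = i by omega, show a - 1 + 1 = a by omega] at this
  have hsplit : (big.map lucas).sum + (small.map lucas).sum = (N.map lucas).sum := by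
    rw [← Multiset.sum_add, ← Multiset.map_add, Multiset.filter_add_not]
  set small' := small.map (Equiv.swap 0 1)
  have hsmall : (small'.map ltil).sum = (small.map lucas).sum := by
    simp [small', Multiset.map_map, lucas_eq_ltil_swap]
  have hle : ∀ i ∈ small', i ≤ a - 1 := by
    simp only [small', Multiset.mem_map]
    rintro _ ⟨i, hi, rfl⟩
    have := (Multiset.mem_filter.mp hi).2
    rw [Equiv.swap_apply_def]
    split_ifs <;> omega
  have hsum : ((small'.map ltil).sum : ℤ) = (j - A) * ltil (a - 1 + 1) - B * ltil (a - 1) - 1 := by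
    rw [hsmall, Nat.sub_add_cancel (by omega : 1 ≤ a), ltil_eq_lucas (by omega),
      ltil_eq_lucas (by omega)]
    have hnat : (small.map lucas).sum + B * lucas (a - 1) + A * lucas a + 1 = j * lucas a := by
      omega
    generalize (small.map lucas).sum = s at hnat ⊢
    zify at hnat
    linear_combination hnat
  have hD : 1 ≤ (j : ℤ) - A := by
    by_contra! h
    have : (0 : ℤ) ≤ (small'.map ltil).sum := by positivity
    have : (0 : ℤ) ≤ (A - j) * ltil (a - 1 + 1) := mul_nonneg (by omega) (by positivity)
    have : (0 : ℤ) ≤ B * ltil (a - 1) := by positivity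
    linarith
  have hparts := manyParts_of_forall_le hle (j - A) B hD hsum
  have hcard : small'.card ≤ N.card := by
    simpa [small'] using Multiset.card_le_card (Multiset.filter_le _ N)
  rw [Nat.sub_add_cancel (by omega : 1 ≤ a)] at hparts
  omega

lemma half_mul_lucas_sub_one_not_mem_Sset {a : ℕ} (ha : 2 ≤ a) : a / 2 * lucas a - 1 ∉ Sset a := by
  intro h
  obtain ⟨c, N, hN, he⟩ := mem_Sset_iff.mp h
  have h3 := three_le_lucas ha
  have hk : lucas a ≤ a / 2 * lucas a := Nat.le_mul_of_pos_left _ (by omega)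
  have hc : c < a / 2 := by
    by_contra! hc
    have := Nat.mul_le_mul_right (lucas a) hc
    omega
  rcases Nat.eq_zero_or_pos c with rfl | hc0
  · simp_all
    omega
  · have hmul := Nat.sub_mul (a / 2) c (lucas a)
    have := Nat.mul_le_mul_right (lucas a) hc.le
    have := lt_card_add_of_sum_map_lucas_add_one_eq (a := a) (j := a / 2 - c) (by omega) (N := N)
      (by omega)
    omega

lemma frobZ_eq_of_forall_lt_mem {a m : ℕ} (hm : m ∉ Sset a) (h : ∀ x, m < x → x ∈ Sset a) :
    frobZ a = m := by
  refine IsGreatest.csSup_eq ⟨Or.inr ⟨m, hm, rfl⟩, ?_⟩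
  rintro _ (rfl | ⟨x, hx, rfl⟩)
  · omega
  · by_contra! hlt
    exact hx (h x (by exact_mod_cast hlt))

lemma frobZ_eq_neg_one {a : ℕ} (h : ∀ x, x ∈ Sset a) : frobZ a = -1 := by
  refine IsGreatest.csSup_eq ⟨Set.mem_insert _ _, ?_⟩
  rintro _ (rfl | ⟨x, hx, rfl⟩)
  · exact le_rfl
  · exact absurd (h x) hx

lemma frobZ_zero : frobZ 0 = 1 :=
  frobZ_eq_of_forall_lt_mem (m := 1)
    (fun h => absurd (lucas_le_of_mem_Sset h one_ne_zero) (by decide))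
    fun x hx => mem_Sset_of_mul_lucas_le (k := 1) (by decide) (show 2 ≤ x by omega)

lemma frobZ_one : frobZ 1 = -1 :=
  frobZ_eq_neg_one fun _ => mem_Sset_of_mul_lucas_le (k := 0) (by decide) (by simp)

lemma lucas_add_two_le_ltil {a : ℕ} (ha : 2 ≤ a) : lucas a + 2 ≤ ltil (2 * (a / 2) + 2) := by
  rcases ha.eq_or_lt with rfl | ha
  · decide
  have hrec := ltil_add_two (n := a - 1) (by omega)
  rw [show a - 1 + 2 = a + 1 by omega, show a - 1 + 1 = a by omega] at hrec
  have h3 : 3 ≤ ltil (a - 1) := (ltil_eq_lucas (n := a - 1) (by omega)) ▸ three_le_lucas (by omega)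
  have hmono : ltil (a + 1) ≤ ltil (2 * (a / 2) + 2) := ltil_strictMono.monotone (by omega)
  rw [← ltil_eq_lucas ha.le]
  omega

lemma frobZ_add_one {a : ℕ} (ha : 2 ≤ a) : frobZ a + 1 = ((a / 2 * lucas a : ℕ) : ℤ) := by
  have hpos : 1 ≤ a / 2 * lucas a := Nat.mul_pos (by omega) (lucas_pos a)
  rw [frobZ_eq_of_forall_lt_mem (half_mul_lucas_sub_one_not_mem_Sset ha)
    fun x hx => mem_Sset_of_mul_lucas_le (lucas_add_two_le_ltil ha) (by omega)]
  push_cast [Nat.cast_sub hpos]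
  ring

lemma mem_of_closure_eq_of_lt_two_mul {S : AddSubmonoid ℕ} {X : Set ℕ} {m g : ℕ}
    (hX : AddSubmonoid.closure X = S) (hS : ∀ x ∈ S, x ≠ 0 → m ≤ x) (hg : g ∈ S) (hg0 : g ≠ 0)
    (hlt : g < 2 * m) : g ∈ X := by
  rw [← hX] at hS hg
  suffices ∀ x ∈ AddSubmonoid.closure X, x ∈ X ∨ x = 0 ∨ 2 * m ≤ x by
    rcases this g hg with h | h | h
    · exact h
    · exact absurd h hg0
    · omega
  intro x hx
  induction hx using AddSubmonoid.closure_induction with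
  | mem x hx => exact Or.inl hx
  | zero => exact Or.inr (Or.inl rfl)
  | add u v hu hv ihu ihv =>
    rcases eq_or_ne u 0 with rfl | hu0
    · simpa using ihv
    rcases eq_or_ne v 0 with rfl | hv0
    · simpa using ihu
    have := hS u hu hu0
    have := hS v hv hv0
    exact Or.inr (Or.inr (by omega))

lemma mem_of_closure_eq_Sset {a g : ℕ} {X : Set ℕ} (hX : AddSubmonoid.closure X = Sset a)
    (hg : g ∈ Sset a) (hg0 : g ≠ 0) (hlt : g < 2 * lucas a) : g ∈ X :=
  mem_of_closure_eq_of_lt_two_mul hX (fun _ => lucas_le_of_mem_Sset) hg hg0 hlt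

lemma add_one_le_card_of_closure_eq_Sset {a : ℕ} (ha : 2 ≤ a) {X : Finset ℕ}
    (hX : AddSubmonoid.closure (X : Set ℕ) = Sset a) : a + 1 ≤ X.card := by
  classical
  have hpos := lucas_pos
  let G := insert (lucas a) ((Finset.range a).image (lucas a + lucas ·))
  have hGX : G ⊆ X := by
    intro g hg
    rcases Finset.mem_insert.mp hg with rfl | hg
    · exact mem_of_closure_eq_Sset hX (AddSubmonoid.subset_closure (Or.inl rfl))
        (hpos a).ne' (by linarith [hpos a])
    · obtain ⟨n, hn, rfl⟩ := Finset.mem_image.mp hg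
      exact mem_of_closure_eq_Sset hX (AddSubmonoid.subset_closure (Or.inr ⟨n, rfl⟩))
        (by linarith [hpos a]) (by linarith [lucas_lt_lucas ha (Finset.mem_range.mp hn)])
  have hG : G.card = a + 1 := by
    rw [Finset.card_insert_of_notMem, Finset.card_image_of_injective, Finset.card_range]
    · exact fun m n h => lucas_injective (by simpa using h)
    · simp [(hpos _).ne']
  exact hG ▸ Finset.card_le_card hGX

lemma two_le_card_of_closure_eq_Sset_zero {X : Finset ℕ}
    (hX : AddSubmonoid.closure (X : Set ℕ) = Sset 0) : 2 ≤ X.card := by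
  have h2 : 2 ∈ X := mem_of_closure_eq_Sset hX (AddSubmonoid.subset_closure (Or.inl rfl))
    (by decide) (by decide)
  have h3 : 3 ∈ X := mem_of_closure_eq_Sset hX (AddSubmonoid.subset_closure (Or.inr ⟨1, rfl⟩))
    (by decide) (by decide)
  exact Finset.card_le_card (s := {2, 3}) (t := X) (by simp [Finset.insert_subset_iff, h2, h3])

lemma finite_setOf_mem_Sset_lt_frobZ (a : ℕ) :
    {s : ℕ | s ∈ Sset a ∧ (s : ℤ) < frobZ a}.Finite :=
  (Set.finite_Iio (frobZ a).toNat).subset fun s hs => by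
    simp only [Set.mem_ofPred_eq, Set.mem_Iio] at hs ⊢
    omega

lemma ltil_sub_two_le_ncard {a : ℕ} (ha : 2 ≤ a) :
    ltil (2 * (a / 2)) - 2 ≤ {s : ℕ | s ∈ Sset a ∧ (s : ℤ) < frobZ a}.ncard := by
  obtain ⟨k, hk⟩ : ∃ k, a / 2 = k + 1 := ⟨a / 2 - 1, by omega⟩
  have hF := frobZ_add_one ha
  have hle : ltil (2 * (a / 2)) ≤ lucas a := ltil_eq_lucas ha ▸ ltil_strictMono.monotone (by omega)
  let T := (Finset.range (ltil (2 * (a / 2)) - 2)).image (k * lucas a + ·)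
  have hT : (T : Set ℕ) ⊆ {s : ℕ | s ∈ Sset a ∧ (s : ℤ) < frobZ a} := by
    intro s hs
    obtain ⟨t, ht, rfl⟩ := Finset.mem_image.mp hs
    rw [Finset.mem_range] at ht
    refine ⟨mul_lucas_add_mem_Sset (by rw [show 2 * k + 2 = 2 * (a / 2) by omega]; omega), ?_⟩
    have hlt : k * lucas a + t + 1 < a / 2 * lucas a := by rw [hk, add_one_mul]; omega
    omega
  calc ltil (2 * (a / 2)) - 2 = T.card := by
        rw [Finset.card_image_of_injective _ (add_right_injective _), Finset.card_range]
    _ = (T : Set ℕ).ncard := (Set.ncard_coe_finset T).symm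
    _ ≤ _ := Set.ncard_le_ncard hT (finite_setOf_mem_Sset_lt_frobZ a)

lemma half_mul_lucas_le {a : ℕ} (ha : 2 ≤ a) :
    a / 2 * lucas a ≤ (a + 1) * (ltil (2 * (a / 2)) - 2) := by
  obtain ⟨k, rfl | rfl⟩ := Nat.even_or_odd' a
  · rw [show 2 * k / 2 = k by omega, ← ltil_eq_lucas ha]
    rcases (show k = 1 ∨ 2 ≤ k by omega) with rfl | hk
    · decide
    have := add_three_le_ltil (n := 2 * k) (by omega)
    obtain ⟨L, hL⟩ : ∃ L, ltil (2 * k) = L + 2 := ⟨ltil (2 * k) - 2, by omega⟩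
    rw [hL, Nat.add_sub_cancel]
    nlinarith
  · rw [show (2 * k + 1) / 2 = k by omega]
    rcases (show k = 1 ∨ 2 ≤ k by omega) with rfl | hk
    · decide
    have hrec := ltil_add_two (n := 2 * k - 1) (by omega)
    rw [show 2 * k - 1 + 2 = 2 * k + 1 by omega, show 2 * k - 1 + 1 = 2 * k by omega,
      ltil_eq_lucas ha] at hrec
    have hlt : ltil (2 * k - 1) < ltil (2 * k) := ltil_strictMono (by omega)
    have := add_three_le_ltil (n := 2 * k) (by omega)
    obtain ⟨L, hL⟩ : ∃ L, ltil (2 * k) = L + 2 := ⟨ltil (2 * k) - 2, by omega⟩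
    rw [hL] at hlt
    rw [hrec, hL, Nat.add_sub_cancel]
    nlinarith

theorem wilf_S_general (a : ℕ) (X : Finset ℕ)
    (hgen : AddSubmonoid.closure (X : Set ℕ) = Sset a) :
    frobZ a + 1 ≤
      (X.card : ℤ) * ({s : ℕ | s ∈ Sset a ∧ (s : ℤ) < frobZ a}.ncard : ℤ) := by
  rcases (show a = 0 ∨ a = 1 ∨ 2 ≤ a by omega) with rfl | rfl | ha
  · have hcard : (2 : ℤ) ≤ X.card := by exact_mod_cast two_le_card_of_closure_eq_Sset_zero hgen
    have hn : (1 : ℤ) ≤ {s : ℕ | s ∈ Sset 0 ∧ (s : ℤ) < frobZ 0}.ncard := by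
      exact_mod_cast (Set.ncard_pos (finite_setOf_mem_Sset_lt_frobZ 0)).mpr
        ⟨0, (Sset 0).zero_mem, by simp [frobZ_zero]⟩
    rw [frobZ_zero] at hn ⊢
    nlinarith
  · rw [frobZ_one]
    positivity
  · calc frobZ a + 1 = ((a / 2 * lucas a : ℕ) : ℤ) := frobZ_add_one ha
      _ ≤ ((a + 1) * (ltil (2 * (a / 2)) - 2) : ℕ) := by exact_mod_cast half_mul_lucas_le ha
      _ ≤ _ := by
        exact_mod_cast Nat.mul_le_mul (add_one_le_card_of_closure_eq_Sset ha hgen)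
          (ltil_sub_two_le_ncard ha)

theorem wilf_S (a : ℕ) (X : Finset ℕ)
    (hgen : AddSubmonoid.closure (X : Set ℕ) = Sset a)
    (hmin : ∀ Y : Finset ℕ, Y ⊂ X → AddSubmonoid.closure (Y : Set ℕ) ≠ Sset a) :
    frobZ a + 1 ≤
      (X.card : ℤ) * ({s : ℕ | s ∈ Sset a ∧ (s : ℤ) < frobZ a}.ncard : ℤ) :=
  wilf_S_general a X hgen
end

section
/- Let a ≥ 3 be an integer. If x ∈ T(a) with x ≠ 0 and x ≠ l_a + l_1, then x + l_a ∈ T(a). -/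
/-! A generator `l_a + l_n` with `n ≠ 1` absorbs an extra `l_a`: since `l_0 = 2 l_1`,
`(l_a + l_0) + l_a = 2 (l_a + l_1)`, and `(l_a + l_{n+2}) + l_a = (l_a + l_{n+1}) + (l_a + l_n)`.
A sum absorbs `l_a` as soon as one summand does, and the only sum of the two exceptional
elements `0` and `l_a + l_1` that is new is `2 (l_a + l_1)`, for which
`2 (l_a + l_1) + l_a = (l_a + l_0) + (l_a + l_a)`. -/

theorem lucas_add_lucas_mem_Tset (a n : ℕ) : lucas a + lucas n ∈ Tset a :=
  AddSubmonoid.subset_closure ⟨n, rfl⟩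

theorem lucas_add_lucas_add_lucas_mem_Tset (a : ℕ) {n : ℕ} (hn : n ≠ 1) :
    lucas a + lucas n + lucas a ∈ Tset a := by
  match n, hn with
  | 0, _ =>
    have h : lucas a + lucas 0 + lucas a = (lucas a + lucas 1) + (lucas a + lucas 1) := by
      simp only [lucas]; ring
    exact h ▸ add_mem (lucas_add_lucas_mem_Tset a 1) (lucas_add_lucas_mem_Tset a 1)
  | m + 2, _ =>
    have h : lucas a + lucas (m + 2) + lucas a
        = (lucas a + lucas (m + 1)) + (lucas a + lucas m) := by
      rw [lucas]; ring
    exact h ▸ add_mem (lucas_add_lucas_mem_Tset a (m + 1)) (lucas_add_lucas_mem_Tset a m)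

theorem two_nsmul_add_lucas_mem_Tset (a : ℕ) :
    2 • (lucas a + lucas 1) + lucas a ∈ Tset a := by
  have h : 2 • (lucas a + lucas 1) + lucas a = (lucas a + lucas 0) + (lucas a + lucas a) := by
    simp only [lucas, smul_eq_mul]; ring
  exact h ▸ add_mem (lucas_add_lucas_mem_Tset a 0) (lucas_add_lucas_mem_Tset a a)

theorem eq_zero_or_eq_or_add_lucas_mem_Tset (a : ℕ) {x : ℕ} (hx : x ∈ Tset a) :
    x = 0 ∨ x = lucas a + lucas 1 ∨ x + lucas a ∈ Tset a := by
  induction hx using AddSubmonoid.closure_induction with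
  | mem g hg =>
    obtain ⟨n, rfl⟩ := hg
    by_cases hn : n = 1
    · exact .inr (.inl (hn ▸ rfl))
    · exact .inr (.inr (lucas_add_lucas_add_lucas_mem_Tset a hn))
  | zero => exact .inl rfl
  | add x y _ hy ihx ihy =>
    rcases ihx with rfl | rfl | hxa
    · simpa only [zero_add] using ihy
    · rcases ihy with rfl | rfl | hya
      · exact .inr (.inl rfl)
      · exact .inr (.inr (two_nsmul (lucas a + lucas 1) ▸ two_nsmul_add_lucas_mem_Tset a))
      · right; right
        rw [add_assoc, add_comm]
        exact add_mem hya (lucas_add_lucas_mem_Tset a 1)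
    · right; right
      rw [add_right_comm]
      exact add_mem hxa hy

theorem add_lucas_mem_T_general (a : ℕ) (x : ℕ) (hx : x ∈ Tset a)
    (h0 : x ≠ 0) (h1 : x ≠ lucas a + lucas 1) : x + lucas a ∈ Tset a :=
  ((eq_zero_or_eq_or_add_lucas_mem_Tset a hx).resolve_left h0).resolve_left h1

theorem add_lucas_mem_T (a : ℕ) (ha : 3 ≤ a) (x : ℕ) (hx : x ∈ Tset a)
    (h0 : x ≠ 0) (h1 : x ≠ lucas a + lucas 1) : x + lucas a ∈ Tset a :=
  add_lucas_mem_T_general a x hx h0 h1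
end
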